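/- Every m-th order complex tensor 𝒜 ∈ ℂ^{n₁×⋯×n_m} attains its largest U-eigenvalue: the function (z⁽¹⁾,…,z⁽ᵐ⁾) ↦ Re⟨𝒜, ⊗_{i=1}^m z⁽ⁱ⁾⟩ attains a maximum on the compact product of complex unit spheres, and the maximum value is a U-eigenvalue of 𝒜 which is ≥ |λ| for every U-eigenvalue λ. -/

import Mathlib

/-!
The form `z ↦ Re⟨A, ⊗ z⁽ⁱ⁾⟩` is continuous on the compact product of unit spheres, so it attains
a maximum `λ` at some `z`. The form is linear in each factor `z⁽ᵏ⁾` separately, with coefficient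
vector `⟨A, ⊗_{i≠k} z⁽ⁱ⁾⟩`; maximality in that factor alone is the equality case of
Cauchy–Schwarz, which forces the coefficient vector to be `λ (z⁽ᵏ⁾)*`. Conversely, at a U-eigenpair
`(μ, z)` the form takes the value `μ`, and replacing one factor `z⁽ᵏ⁾` by `-z⁽ᵏ⁾` gives the
value `-μ`, so `|μ| ≤ λ`.
-/

open Finset Complex

/-- Full Hermitian contraction of two complex tensors: `⟨A,B⟩ = Σ conj(A) * B`. -/
noncomputable def tinner {m : ℕ} {n : Fin m → ℕ} (A B : (∀ i : Fin m, Fin (n i)) → ℂ) : ℂ :=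
  ∑ idx : ∀ i : Fin m, Fin (n i), (starRingEnd ℂ) (A idx) * B idx

/-- The rank-one tensor `⊗ᵢ z⁽ⁱ⁾`. -/
noncomputable def otimes {m : ℕ} {n : Fin m → ℕ} (z : ∀ i : Fin m, Fin (n i) → ℂ) :
    (∀ i : Fin m, Fin (n i)) → ℂ :=
  fun idx => ∏ i, z i (idx i)

/-- `z` is a unit vector in `ℂ^k`. -/
def IsUnitVec {k : ℕ} (z : Fin k → ℂ) : Prop := ∑ j, Complex.normSq (z j) = 1

/-- The vector `⟨A, ⊗_{i≠k} z⁽ⁱ⁾⟩ ∈ ℂ^{n_k}`: contraction of `A` against all but the k-th vector. -/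
noncomputable def contraK {m : ℕ} {n : Fin m → ℕ} (A : (∀ i : Fin m, Fin (n i)) → ℂ)
    (z : ∀ i : Fin m, Fin (n i) → ℂ) (k : Fin m) (j : Fin (n k)) : ℂ :=
  ∑ idx : ∀ i : Fin m, Fin (n i),
    if idx k = j then (starRingEnd ℂ) (A idx) * ∏ i ∈ Finset.univ.erase k, z i (idx i) else 0

/-- `(lam, z)` is a U-eigenpair of `A`: all `z⁽ⁱ⁾` are unit vectors and
`⟨A, ⊗_{i≠k} z⁽ⁱ⁾⟩ = lam (z⁽ᵏ⁾)*` for every `k`. -/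
def IsUEigenpair {m : ℕ} {n : Fin m → ℕ} (A : (∀ i : Fin m, Fin (n i)) → ℂ) (lam : ℝ)
    (z : ∀ i : Fin m, Fin (n i) → ℂ) : Prop :=
  (∀ i, IsUnitVec (z i)) ∧ ∀ k : Fin m, ∀ j : Fin (n k),
    contraK A z k j = (lam : ℂ) * (starRingEnd ℂ) (z k j)

/-- `lam` is a U-eigenvalue of `A`. -/
def IsUEigenvalue {m : ℕ} {n : Fin m → ℕ} (A : (∀ i : Fin m, Fin (n i)) → ℂ) (lam : ℝ) : Prop :=
  ∃ z, IsUEigenpair A lam z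

theorem eq_ofReal_smul_of_forall_re_inner_le {𝕜 E : Type*} [RCLike 𝕜] [NormedAddCommGroup E]
    [InnerProductSpace 𝕜 E] {x v : E} {lam : ℝ} (hv : ‖v‖ = 1)
    (hle : ∀ w : E, ‖w‖ = 1 → RCLike.re (inner 𝕜 x w) ≤ lam)
    (heq : RCLike.re (inner 𝕜 x v) = lam) : x = (lam : 𝕜) • v := by
  have hx_le : ‖x‖ ≤ lam := by
    rcases eq_or_ne x 0 with rfl | hx
    · simp [← heq]
    · have h := hle ((‖x‖⁻¹ : 𝕜) • x) (norm_smul_inv_norm hx)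
      rwa [inner_smul_right, inner_self_eq_norm_sq_to_K, ← RCLike.ofReal_inv, ← RCLike.ofReal_pow,
        ← RCLike.ofReal_mul, RCLike.ofReal_re, pow_two,
        inv_mul_cancel_left₀ (norm_ne_zero_iff.mpr hx)] at h
  have hsq : ‖x - (lam : 𝕜) • v‖ ^ 2 ≤ 0 := by
    rw [norm_sub_sq (𝕜 := 𝕜), inner_smul_right, RCLike.re_ofReal_mul, heq, norm_smul, hv,
      RCLike.norm_ofReal]
    nlinarith [norm_nonneg x, sq_abs lam]
  exact sub_eq_zero.mp <| norm_eq_zero.mp <|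
    (pow_eq_zero_iff two_ne_zero).mp (le_antisymm hsq (by positivity))

section UnitVec

variable {k : ℕ}

theorem isUnitVec_iff_norm_toLp (z : Fin k → ℂ) : IsUnitVec z ↔ ‖WithLp.toLp 2 z‖ = 1 := by
  rw [IsUnitVec, EuclideanSpace.norm_eq, Real.sqrt_eq_one]
  simp [Complex.normSq_eq_norm_sq]

theorem isUnitVec_neg {z : Fin k → ℂ} (hz : IsUnitVec z) : IsUnitVec (-z) := by
  simpa [IsUnitVec] using hz

theorem isUnitVec_pi_single (j : Fin k) : IsUnitVec (Pi.single j 1 : Fin k → ℂ) := by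
  simp [IsUnitVec, Pi.single_apply]

theorem isCompact_setOf_isUnitVec : IsCompact {z : Fin k → ℂ | IsUnitVec z} := by
  convert (isCompact_sphere (0 : EuclideanSpace ℂ (Fin k)) 1).image (PiLp.continuous_ofLp 2 _)
  ext z
  rw [Set.mem_ofPred_eq, isUnitVec_iff_norm_toLp]
  exact ⟨fun hz => ⟨_, by simpa using hz, rfl⟩, by rintro ⟨x, hx, rfl⟩; simpa using hx⟩

theorem eq_ofReal_mul_conj_of_forall_re_sum_mul_le {c v : Fin k → ℂ} {lam : ℝ}
    (hv : IsUnitVec v) (hle : ∀ w, IsUnitVec w → (∑ j, c j * w j).re ≤ lam)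
    (heq : (∑ j, c j * v j).re = lam) (j : Fin k) : c j = lam * starRingEnd ℂ (v j) := by
  have sum_mul_eq_inner : ∀ w : Fin k → ℂ,
      ∑ j, c j * w j = inner ℂ (WithLp.toLp 2 (star c)) (WithLp.toLp 2 w) := by
    intro w
    simp [PiLp.inner_apply, mul_comm]
  have h : WithLp.toLp 2 (star c) = (lam : ℂ) • WithLp.toLp 2 v :=
    eq_ofReal_smul_of_forall_re_inner_le ((isUnitVec_iff_norm_toLp v).mp hv)
      (fun w hw => by
        simpa [sum_mul_eq_inner] using hle w.ofLp ((isUnitVec_iff_norm_toLp _).mpr hw))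
      (by rwa [← sum_mul_eq_inner])
  simpa using congrArg (fun x => starRingEnd ℂ (x.ofLp j)) h

end UnitVec

theorem isCompact_setOf_forall_isUnitVec {ι : Type*} {n : ι → ℕ} :
    IsCompact {z : ∀ i, Fin (n i) → ℂ | ∀ i, IsUnitVec (z i)} := by
  simpa [Set.pi] using isCompact_univ_pi fun i => isCompact_setOf_isUnitVec (k := n i)

theorem isUnitVec_update {ι : Type*} [DecidableEq ι] {n : ι → ℕ} {z : ∀ i, Fin (n i) → ℂ}
    (hz : ∀ i, IsUnitVec (z i)) {k : ι} {w : Fin (n k) → ℂ} (hw : IsUnitVec w) :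
    ∀ i, IsUnitVec (Function.update z k w i) :=
  Function.forall_update_iff z (p := fun _ v => IsUnitVec v) |>.mpr ⟨hw, fun i _ => hz i⟩

section Tensor

variable {m : ℕ} {n : Fin m → ℕ} (A : (∀ i : Fin m, Fin (n i)) → ℂ)

theorem continuous_re_tinner_otimes :
    Continuous fun z : ∀ i, Fin (n i) → ℂ => (tinner A (otimes z)).re := by
  unfold tinner otimes
  fun_prop

theorem tinner_otimes_eq_sum_contraK_mul (z : ∀ i, Fin (n i) → ℂ) (k : Fin m) :
    tinner A (otimes z) = ∑ j, contraK A z k j * z k j := by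
  unfold tinner otimes contraK
  simp_rw [Finset.sum_mul]
  rw [Finset.sum_comm]
  refine Finset.sum_congr rfl fun idx _ => ?_
  rw [Finset.sum_eq_single_of_mem (idx k) (Finset.mem_univ _) fun j _ hj => by
    rw [if_neg (Ne.symm hj), zero_mul]]
  rw [if_pos rfl, ← Finset.mul_prod_erase Finset.univ _ (Finset.mem_univ k)]
  ring

theorem contraK_update_self (z : ∀ i, Fin (n i) → ℂ) (k : Fin m) (w : Fin (n k) → ℂ) :
    contraK A (Function.update z k w) k = contraK A z k := by
  funext j
  refine Finset.sum_congr rfl fun idx _ => ?_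
  congr 2
  exact Finset.prod_congr rfl fun i hi => by rw [Function.update_of_ne (Finset.ne_of_mem_erase hi)]

theorem tinner_otimes_update (z : ∀ i, Fin (n i) → ℂ) (k : Fin m) (w : Fin (n k) → ℂ) :
    tinner A (otimes (Function.update z k w)) = ∑ j, contraK A z k j * w j := by
  rw [tinner_otimes_eq_sum_contraK_mul A _ k, contraK_update_self, Function.update_self]

theorem tinner_otimes_update_neg (z : ∀ i, Fin (n i) → ℂ) (k : Fin m) :
    tinner A (otimes (Function.update z k (-z k))) = -tinner A (otimes z) := by
  simp [tinner_otimes_update, tinner_otimes_eq_sum_contraK_mul A z k]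

variable {A}

theorem IsUEigenpair.tinner_otimes_eq {lam : ℝ} {z : ∀ i, Fin (n i) → ℂ}
    (h : IsUEigenpair A lam z) (k : Fin m) : tinner A (otimes z) = lam := by
  have hk : ∑ j, starRingEnd ℂ (z k j) * z k j = 1 := by
    simp_rw [mul_comm (starRingEnd ℂ _), Complex.mul_conj]
    exact_mod_cast h.1 k
  rw [tinner_otimes_eq_sum_contraK_mul A z k]
  simp_rw [h.2 k, mul_assoc, ← Finset.mul_sum, hk, mul_one]

theorem isUEigenpair_of_isMaxOn {z₀ : ∀ i, Fin (n i) → ℂ} (hz₀ : ∀ i, IsUnitVec (z₀ i))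
    (hmax : IsMaxOn (fun z => (tinner A (otimes z)).re) {z | ∀ i, IsUnitVec (z i)} z₀) :
    IsUEigenpair A (tinner A (otimes z₀)).re z₀ :=
  ⟨hz₀, fun k => eq_ofReal_mul_conj_of_forall_re_sum_mul_le (hz₀ k)
    (fun w hw => by simpa [tinner_otimes_update] using hmax (isUnitVec_update hz₀ hw))
    (by rw [tinner_otimes_eq_sum_contraK_mul A z₀ k])⟩

theorem IsUEigenpair.abs_le_of_isMaxOn {mu : ℝ} {z z₀ : ∀ i, Fin (n i) → ℂ}
    (h : IsUEigenpair A mu z) (k : Fin m)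
    (hmax : IsMaxOn (fun z => (tinner A (otimes z)).re) {z | ∀ i, IsUnitVec (z i)} z₀) :
    |mu| ≤ (tinner A (otimes z₀)).re := by
  have hle : (tinner A (otimes z)).re ≤ _ := hmax h.1
  have hneg_le : (tinner A (otimes (Function.update z k (-z k)))).re ≤ _ :=
    hmax (isUnitVec_update h.1 (isUnitVec_neg (h.1 k)))
  simp only [tinner_otimes_update_neg, h.tinner_otimes_eq k, Complex.neg_re,
    Complex.ofReal_re] at hle hneg_le
  exact abs_le.mpr ⟨by linarith, hle⟩

end Tensor

/-- Every complex tensor attains its largest U-eigenvalue: `Re⟨A, ⊗z⁽ⁱ⁾⟩` attains a maximum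
over the product of unit spheres, the maximum value is a U-eigenvalue of `A`, and it
dominates `|lam|` for every U-eigenvalue `lam`. -/
theorem exists_largest_UEigenvalue {m : ℕ} {n : Fin m → ℕ} (hm : 0 < m)
    (hn : ∀ i, 0 < n i) (A : (∀ i : Fin m, Fin (n i)) → ℂ) :
    ∃ lam : ℝ,
      IsGreatest {r : ℝ | ∃ z, (∀ i, IsUnitVec (z i)) ∧ r = (tinner A (otimes z)).re} lam
      ∧ IsUEigenvalue A lam
      ∧ ∀ mu : ℝ, IsUEigenvalue A mu → |mu| ≤ lam := by
  obtain ⟨z₀, hz₀, hmax⟩ := isCompact_setOf_forall_isUnitVec.exists_isMaxOn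
    ⟨fun i => Pi.single ⟨0, hn i⟩ 1, fun i => isUnitVec_pi_single _⟩
    (continuous_re_tinner_otimes A).continuousOn
  refine ⟨_, ⟨⟨z₀, hz₀, rfl⟩, ?_⟩, ⟨z₀, isUEigenpair_of_isMaxOn hz₀ hmax⟩,
    fun mu ⟨z, hz⟩ => hz.abs_le_of_isMaxOn ⟨0, hm⟩ hmax⟩
  rintro _ ⟨z, hz, rfl⟩
  exact hmax hz
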